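/- arXiv:2406.12855 — 2 statements merged into one kernel-verified Lean document; each statement's English description precedes it below -/
import Mathlib

section
/- Let ψ : ℝ⁴ → Cl be differentiable and satisfy the Killing spin field equation with coefficient functions ω_μ^{νσ}, H_μ^{νi}, A_μ^{ij}. Then for every tangent index μ ∈ {0,1,2,3} and every σ ∈ {0,1,2,3}: ∂_σ( reverse(ψ)·e_μ·ψ ) = Σ_{β=0}^{3} ( Σ_{α=0}^{3} η_{μα}·ω_σ^{αβ} ) · reverse(ψ)·e_β·ψ + Σ_{i=4}^{9} ( Σ_{α=0}^{3} η_{μα}·H_σ^{αi} ) · reverse(ψ)·e_i·ψ. (The tangent frame vectors 𝐞_μ = reverse(ψ)e_μψ satisfy d𝐞_μ = ω_μ^β 𝐞_β + H_μ^i 𝐞_i.) -/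
open CliffordAlgebra

noncomputable section

/-- The Minkowski signs `(-1,1,…,1)` on `ℝ^{10}`. -/
def ηv : Fin 10 → ℝ := fun I => if I = 0 then -1 else 1

/-- The Minkowski metric `η = diag(-1,1,…,1)` as a matrix. -/
def ηm : Fin 10 → Fin 10 → ℝ := fun I J => if I = J then ηv I else 0

/-- The Minkowski quadratic form `Q(x) = -x₀² + x₁² + ⋯ + x₉²` on `ℝ^{10}`. -/
def Qm : QuadraticForm ℝ (Fin 10 → ℝ) := QuadraticMap.weightedSumSquares ℝ ηv

/-- The Clifford algebra of the Minkowski form on `ℝ^{10}`. -/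
abbrev Cl := CliffordAlgebra Qm

/-- The images `e_I` of the standard basis vectors of `ℝ^{10}` in `Cl`. -/
def e (I : Fin 10) : Cl := ι Qm (Pi.single I 1)

/-- Inclusion of tangent indices `{0,…,3}` into `{0,…,9}`. -/
def tIdx (μ : Fin 4) : Fin 10 := ⟨μ.1, by omega⟩

/-- Inclusion of normal indices `{4,…,9}` into `{0,…,9}`. -/
def nIdx (i : Fin 6) : Fin 10 := ⟨i.1 + 4, by omega⟩

/-- The Clifford-algebra-valued coefficient `K_μ` of the Killing spin field equation:
`K_μ = (1/4)·Σ_{ν,σ} ω_μ^{νσ} e_ν e_σ + (1/2)·Σ_{ν,i} H_μ^{νi} e_ν e_i + (1/4)·Σ_{i,j} A_μ^{ij} e_i e_j`. -/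
def Kfield (ω : Fin 4 → Fin 4 → Fin 4 → (Fin 4 → ℝ) → ℝ)
    (H : Fin 4 → Fin 4 → Fin 6 → (Fin 4 → ℝ) → ℝ)
    (A : Fin 4 → Fin 6 → Fin 6 → (Fin 4 → ℝ) → ℝ)
    (μ : Fin 4) (x : Fin 4 → ℝ) : Cl :=
  (1/4 : ℝ) • ∑ ν : Fin 4, ∑ σ : Fin 4, ω μ ν σ x • (e (tIdx ν) * e (tIdx σ))
    + (1/2 : ℝ) • ∑ ν : Fin 4, ∑ i : Fin 6, H μ ν i x • (e (tIdx ν) * e (nIdx i))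
    + (1/4 : ℝ) • ∑ i : Fin 6, ∑ j : Fin 6, A μ i j x • (e (nIdx i) * e (nIdx j))


/-! Differentiating `ψ̃ e_μ ψ` along `∂_σ ψ = K_σ ψ` gives `ψ̃ (reverse K_σ · e_μ + e_μ K_σ) ψ`.
Since `K_σ` is a bivector, `reverse K_σ = -K_σ`, so the derivative is `ψ̃ [e_μ, K_σ] ψ`. The
commutator of a vector with a bivector is a vector, `[e_a, e_b e_c] = 2η_{ab} e_c - 2η_{ac} e_b`;
the normal–normal part of `K_σ` commutes with the tangent vector `e_μ`, and antisymmetry of `ω`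
merges the two halves of the tangent–tangent part.

Analytically only finite-dimensionality of `Cl` matters: it makes `(a, b) ↦ reverse a · e_μ · b`
a continuous bilinear map for whatever norm `Cl` carries. -/

instance CliffordAlgebra.finiteDimensional {K V : Type*} [Field K] [Invertible (2 : K)]
    [AddCommGroup V] [Module K V] [FiniteDimensional K V] (Q : QuadraticForm K V) :
    FiniteDimensional K (CliffordAlgebra Q) :=
  have : FiniteDimensional K (ExteriorAlgebra K V) :=
    .of_basis (Module.finBasis K V).ExteriorAlgebra
  .equiv (equivExterior Q).symm

theorem LinearMap.fderiv_bilinear_apply {𝕜 E F G : Type*} [NontriviallyNormedField 𝕜]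
    [CompleteSpace 𝕜] [NormedAddCommGroup E] [NormedSpace 𝕜 E]
    [NormedAddCommGroup F] [NormedSpace 𝕜 F] [FiniteDimensional 𝕜 F]
    [NormedAddCommGroup G] [NormedSpace 𝕜 G]
    (B : F →ₗ[𝕜] F →ₗ[𝕜] G) {f g : E → F} {x : E}
    (hf : DifferentiableAt 𝕜 f x) (hg : DifferentiableAt 𝕜 g x) (v : E) :
    fderiv 𝕜 (fun y => B (f y) (g y)) x v =
      B (fderiv 𝕜 f x v) (g x) + B (f x) (fderiv 𝕜 g x v) := by
  let Bc : F →L[𝕜] F →L[𝕜] G :=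
    LinearMap.toContinuousLinearMap (LinearMap.toContinuousLinearMap.toLinearMap ∘ₗ B)
  rw [show (fun y => B (f y) (g y)) = fun y => Bc (f y) (g y) from rfl,
    Bc.fderiv_of_bilinear hf hg]
  simp [Bc, add_comm]

theorem CliffordAlgebra.ι_lie_ι_mul_ι {R M : Type*} [CommRing R] [AddCommGroup M] [Module R M]
    {Q : QuadraticForm R M} (a b c : M) :
    ⁅ι Q a, ι Q b * ι Q c⁆ =
      QuadraticMap.polar Q a b • ι Q c - QuadraticMap.polar Q a c • ι Q b := by
  rw [Ring.lie_def, ← mul_assoc, ι_mul_ι_comm a b, mul_assoc _ (ι Q c), ι_mul_ι_comm c a,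
    QuadraticMap.polar_comm Q c a]
  simp only [sub_mul, mul_sub, Algebra.algebraMap_eq_smul_one, smul_mul_assoc, mul_smul_comm,
    one_mul, mul_one, mul_assoc]
  abel

theorem Finset.sum_sum_smul_swap_of_antisymm {ι R M : Type*} [Ring R] [AddCommGroup M]
    [Module R M] (s : Finset ι) (c : ι → ι → R) (hc : ∀ i j, c i j = -c j i) (g : ι → ι → M) :
    ∑ i ∈ s, ∑ j ∈ s, c i j • g j i = -∑ i ∈ s, ∑ j ∈ s, c i j • g i j := by
  rw [Finset.sum_comm, ← Finset.sum_neg_distrib]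
  refine Finset.sum_congr rfl fun i _ => ?_
  rw [← Finset.sum_neg_distrib]
  exact Finset.sum_congr rfl fun j _ => by rw [hc j i, neg_smul]

theorem QuadraticMap.polar_weightedSumSquares {ι R : Type*} [Fintype ι] [CommRing R] (w : ι → R)
    (x y : ι → R) : polar (weightedSumSquares R w) x y = ∑ i, w i * (2 * (x i * y i)) := by
  simp only [polar, weightedSumSquares_apply, ← Finset.sum_sub_distrib, Pi.add_apply, smul_eq_mul]
  exact Finset.sum_congr rfl fun i _ => by ring

lemma polar_Qm_single (I J : Fin 10) :
    QuadraticMap.polar Qm (Pi.single I 1) (Pi.single J 1) = 2 * ηm I J := by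
  simp only [Qm, QuadraticMap.polar_weightedSumSquares, Pi.single_apply, ηm]
  split_ifs with h
  · subst h; simp [mul_comm]
  · simp [Ne.symm h]

lemma e_lie_e_mul_e (a b c : Fin 10) :
    ⁅e a, e b * e c⁆ = (2 * ηm a b) • e c - (2 * ηm a c) • e b := by
  simp only [e, ι_lie_ι_mul_ι, polar_Qm_single]

lemma reverse_e_mul_e (a b : Fin 10) : reverse (Q := Qm) (e a * e b) = e b * e a := by
  simp [e]

lemma ηm_tIdx_nIdx (ν : Fin 4) (i : Fin 6) : ηm (tIdx ν) (nIdx i) = 0 := by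
  have : tIdx ν ≠ nIdx i := by simp [tIdx, nIdx, Fin.ext_iff]; omega
  simp [ηm, this]

lemma e_nIdx_mul_e_tIdx (ν : Fin 4) (i : Fin 6) :
    e (nIdx i) * e (tIdx ν) = -(e (tIdx ν) * e (nIdx i)) := by
  rw [e, e, ι_mul_ι_comm, QuadraticMap.polar_comm, polar_Qm_single, ηm_tIdx_nIdx]
  simp

section Kfield

variable (ω : Fin 4 → Fin 4 → Fin 4 → (Fin 4 → ℝ) → ℝ)
  (H : Fin 4 → Fin 4 → Fin 6 → (Fin 4 → ℝ) → ℝ)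
  (A : Fin 4 → Fin 6 → Fin 6 → (Fin 4 → ℝ) → ℝ)

lemma reverse_Kfield (hω : ∀ μ ν σ x, ω μ ν σ x = - ω μ σ ν x)
    (hA : ∀ μ i j x, A μ i j x = - A μ j i x) (μ : Fin 4) (x : Fin 4 → ℝ) :
    reverse (Q := Qm) (Kfield ω H A μ x) = - Kfield ω H A μ x := by
  simp only [Kfield, map_add, map_smul, map_sum, reverse_e_mul_e, e_nIdx_mul_e_tIdx, smul_neg,
    Finset.sum_neg_distrib,
    Finset.sum_sum_smul_swap_of_antisymm _ _ (hω μ · · x) fun ν σ => e (tIdx ν) * e (tIdx σ),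
    Finset.sum_sum_smul_swap_of_antisymm _ _ (hA μ · · x) fun i j => e (nIdx i) * e (nIdx j)]
  abel

section Commutator

attribute [local instance] LieRing.ofAssociativeRing

lemma e_lie_Kfield (hω : ∀ μ ν σ x, ω μ ν σ x = - ω μ σ ν x) (μ σ : Fin 4) (x : Fin 4 → ℝ) :
    ⁅e (tIdx μ), Kfield ω H A σ x⁆ =
      ∑ β : Fin 4, (∑ α : Fin 4, ηm (tIdx μ) (tIdx α) * ω σ α β x) • e (tIdx β)
        + ∑ i : Fin 6, (∑ α : Fin 4, ηm (tIdx μ) (tIdx α) * H σ α i x) • e (nIdx i) := by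
  have tangent_part : (1 / 4 : ℝ) • ∑ ν : Fin 4, ∑ ρ : Fin 4, ω σ ν ρ x •
      ((2 * ηm (tIdx μ) (tIdx ν)) • e (tIdx ρ) - (2 * ηm (tIdx μ) (tIdx ρ)) • e (tIdx ν)) =
      ∑ β : Fin 4, (∑ α : Fin 4, ηm (tIdx μ) (tIdx α) * ω σ α β x) • e (tIdx β) := by
    have hω' := Finset.sum_sum_smul_swap_of_antisymm Finset.univ _ (hω σ · · x)
      fun ν ρ => (2 * ηm (tIdx μ) (tIdx ν)) • e (tIdx ρ)
    simp only [smul_sub, Finset.sum_sub_distrib]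
    rw [hω', smul_neg, sub_neg_eq_add, ← add_smul]
    simp only [Finset.smul_sum, smul_smul, Finset.sum_smul]
    rw [Finset.sum_comm]
    exact Finset.sum_congr rfl fun _ _ => Finset.sum_congr rfl fun _ _ => by congr 1; ring
  have mixed_part : (1 / 2 : ℝ) • ∑ ν : Fin 4, ∑ i : Fin 6, H σ ν i x •
      ((2 * ηm (tIdx μ) (tIdx ν)) • e (nIdx i) - (2 * 0 : ℝ) • e (tIdx ν)) =
      ∑ i : Fin 6, (∑ α : Fin 4, ηm (tIdx μ) (tIdx α) * H σ α i x) • e (nIdx i) := by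
    simp only [mul_zero, zero_smul, sub_zero, smul_smul, Finset.smul_sum, Finset.sum_smul]
    rw [Finset.sum_comm]
    exact Finset.sum_congr rfl fun _ _ => Finset.sum_congr rfl fun _ _ => by congr 1; ring
  simp only [Kfield, lie_add, lie_smul, lie_sum, e_lie_e_mul_e, ηm_tIdx_nIdx, tangent_part,
    mixed_part]
  simp

end Commutator

end Kfield

/-- If `ψ` satisfies the Killing spin field equation, the tangent frame vectors
`𝐞_μ = reverse(ψ) e_μ ψ` satisfy `d𝐞_μ = ω_μ^β 𝐞_β + H_μ^i 𝐞_i`. -/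
theorem stmt_1 (nCl : AddGroupNorm Cl)
    (hns : ∀ (c : ℝ) (x : Cl), nCl (c • x) ≤ ‖c‖ * nCl x) :
    letI : NormedAddCommGroup Cl := nCl.toNormedAddCommGroup
    letI : NormedSpace ℝ Cl := { norm_smul_le := hns }
    ∀ (ψ : (Fin 4 → ℝ) → Cl)
      (ω : Fin 4 → Fin 4 → Fin 4 → (Fin 4 → ℝ) → ℝ)
      (H : Fin 4 → Fin 4 → Fin 6 → (Fin 4 → ℝ) → ℝ)
      (A : Fin 4 → Fin 6 → Fin 6 → (Fin 4 → ℝ) → ℝ),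
      Differentiable ℝ ψ →
      (∀ μ ν σ x, ω μ ν σ x = - ω μ σ ν x) →
      (∀ μ i j x, A μ i j x = - A μ j i x) →
      (∀ μ x, fderiv ℝ ψ x (Pi.single μ 1) = Kfield ω H A μ x * ψ x) →
      ∀ (μ σ : Fin 4) (x : Fin 4 → ℝ),
        fderiv ℝ (fun y => reverse (Q := Qm) (ψ y) * e (tIdx μ) * ψ y) x (Pi.single σ 1) =
          ∑ β : Fin 4, (∑ α : Fin 4, ηm (tIdx μ) (tIdx α) * ω σ α β x) •
              (reverse (Q := Qm) (ψ x) * e (tIdx β) * ψ x)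
          + ∑ i : Fin 6, (∑ α : Fin 4, ηm (tIdx μ) (tIdx α) * H σ α i x) •
              (reverse (Q := Qm) (ψ x) * e (nIdx i) * ψ x) := by
  let _ : NormedAddCommGroup Cl := nCl.toNormedAddCommGroup
  let _ : NormedSpace ℝ Cl := { norm_smul_le := hns }
  intro ψ ω H A hψ hω hA hK μ σ x
  let B : Cl →ₗ[ℝ] Cl →ₗ[ℝ] Cl :=
    LinearMap.mul ℝ Cl ∘ₗ LinearMap.mulRight ℝ (e (tIdx μ)) ∘ₗ reverse
  set K := Kfield ω H A σ x
  calc fderiv ℝ (fun y => B (ψ y) (ψ y)) x (Pi.single σ 1)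
      = reverse (K * ψ x) * e (tIdx μ) * ψ x + reverse (ψ x) * e (tIdx μ) * (K * ψ x) := by
        rw [B.fderiv_bilinear_apply (hψ x) (hψ x), hK]; rfl
    _ = reverse (ψ x) * ⁅e (tIdx μ), K⁆ * ψ x := by
        rw [reverse.map_mul, reverse_Kfield ω H A hω hA, Ring.lie_def]; noncomm_ring
    _ = _ := by
        rw [e_lie_Kfield ω H A hω]
        simp only [mul_add, add_mul, Finset.mul_sum, Finset.sum_mul, mul_smul_comm, smul_mul_assoc]
end
end

section
/- Let ψ₁, ψ₂ : ℝ⁴ → Cl be differentiable maps, and K¹_μ, K²_μ : ℝ⁴ → Cl (μ ∈ {0,1,2,3}) maps such that ∂_μψ₁ = K¹_μ·ψ₁ and ∂_μψ₂ = K²_μ·ψ₂ for all μ, and suppose reverse(ψ₁(x))·ψ₁(x) = 1 for all x. Then the product ψ₁ψ₂ satisfies ∂_μ(ψ₁ψ₂) = ( K¹_μ + ψ₁·K²_μ·reverse(ψ₁) )·(ψ₁ψ₂) for all μ. (The product of two Killing spin fields is again a Killing spin field, with coefficient K¹ + ψ₁K²ψ̃₁.) -/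
open CliffordAlgebra

noncomputable section

/-!
By the Leibniz rule `∂_μ(ψ₁ψ₂) = K¹_μψ₁ψ₂ + ψ₁K²_μψ₂`, and `ψ₁K²_μψ₂ = (ψ₁K²_μψ̃₁)(ψ₁ψ₂)` because
`ψ̃₁ψ₁ = 1`. The Leibniz rule needs multiplication to be continuous for the arbitrary norm given
on `Cl`; it is, because `Cl` is finite-dimensional: it is linearly isomorphic to the exterior
algebra of `ℝ^{10}`, in which wedge products of more than ten vectors vanish.
-/

namespace ExteriorAlgebra

variable {K V : Type*} [Field K] [AddCommGroup V] [Module K V] [FiniteDimensional K V]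

theorem ιMulti_eq_zero_of_finrank_lt {n : ℕ} (hn : Module.finrank K V < n) (v : Fin n → V) :
    ιMulti K n v = 0 :=
  (ιMulti K n).map_linearDependent v fun hv => by
    have := hv.fintype_card_le_finrank
    rw [Fintype.card_fin] at this
    exact this.not_gt hn

instance instModuleFinite : Module.Finite K (ExteriorAlgebra K V) := by
  suffices h : ⊤ ≤ ⨆ n ∈ Finset.range (Module.finrank K V + 1), ⋀[K]^n V from
    .of_fg_top <| top_le_iff.mp h ▸
      Submodule.fg_biSup _ _ fun n _ => Module.Finite.iff_fg.mp inferInstance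
  rw [← ιMulti_span, Submodule.span_le]
  rintro _ ⟨⟨n, v⟩, rfl⟩
  by_cases hn : n ≤ Module.finrank K V
  · exact (le_biSup (fun n => ⋀[K]^n V) (Finset.mem_range_succ_iff.mpr hn))
      (ιMulti_range K n ⟨v, rfl⟩)
  · simp [ιMulti_eq_zero_of_finrank_lt (not_le.mp hn) v]

end ExteriorAlgebra

instance CliffordAlgebra.instModuleFinite {K V : Type*} [Field K] [Invertible (2 : K)]
    [AddCommGroup V] [Module K V] [FiniteDimensional K V] (Q : QuadraticForm K V) :
    Module.Finite K (CliffordAlgebra Q) :=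
  .equiv (equivExterior Q).symm

theorem LinearMap.fderiv_of_bilinear_apply {𝕜 E F G H : Type*} [NontriviallyNormedField 𝕜]
    [CompleteSpace 𝕜] [NormedAddCommGroup E] [NormedSpace 𝕜 E] [NormedAddCommGroup F]
    [NormedSpace 𝕜 F] [FiniteDimensional 𝕜 F] [NormedAddCommGroup G] [NormedSpace 𝕜 G]
    [FiniteDimensional 𝕜 G] [NormedAddCommGroup H] [NormedSpace 𝕜 H] (B : F →ₗ[𝕜] G →ₗ[𝕜] H)
    {f : E → F} {g : E → G} {x : E} (hf : DifferentiableAt 𝕜 f x) (hg : DifferentiableAt 𝕜 g x)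
    (v : E) :
    fderiv 𝕜 (fun y => B (f y) (g y)) x v = B (f x) (fderiv 𝕜 g x v) + B (fderiv 𝕜 f x v) (g x) :=
  let Bc : F →L[𝕜] G →L[𝕜] H :=
    toContinuousLinearMap (toContinuousLinearMap.toLinearMap ∘ₗ B)
  congr($(Bc.fderiv_of_bilinear hf hg) v)

theorem mul_mul_mul_cancel_of_mul_eq_one {R : Type*} [Ring R] {a r : R} (h : r * a = 1)
    (k b : R) : a * k * r * (a * b) = a * (k * b) := by
  rw [mul_assoc (a * k), ← mul_assoc r, h, one_mul, mul_assoc]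

/-- The product of two Killing spin fields is again a Killing spin field, with coefficient
`K¹_μ + ψ₁·K²_μ·reverse(ψ₁)`. -/
theorem stmt_6 (nCl : AddGroupNorm Cl)
    (hns : ∀ (c : ℝ) (x : Cl), nCl (c • x) ≤ ‖c‖ * nCl x) :
    letI : NormedAddCommGroup Cl := nCl.toNormedAddCommGroup
    letI : NormedSpace ℝ Cl := { norm_smul_le := hns }
    ∀ (ψ₁ ψ₂ : (Fin 4 → ℝ) → Cl) (K₁ K₂ : Fin 4 → (Fin 4 → ℝ) → Cl),
      Differentiable ℝ ψ₁ →
      Differentiable ℝ ψ₂ →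
      (∀ μ x, fderiv ℝ ψ₁ x (Pi.single μ 1) = K₁ μ x * ψ₁ x) →
      (∀ μ x, fderiv ℝ ψ₂ x (Pi.single μ 1) = K₂ μ x * ψ₂ x) →
      (∀ x, reverse (Q := Qm) (ψ₁ x) * ψ₁ x = 1) →
      ∀ (μ : Fin 4) (x : Fin 4 → ℝ),
        fderiv ℝ (fun y => ψ₁ y * ψ₂ y) x (Pi.single μ 1) =
          (K₁ μ x + ψ₁ x * K₂ μ x * reverse (Q := Qm) (ψ₁ x)) * (ψ₁ x * ψ₂ x) := by
  intro ψ₁ ψ₂ K₁ K₂ hψ₁ hψ₂ hK₁ hK₂ hunit μ x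
  let : NormedAddCommGroup Cl := nCl.toNormedAddCommGroup
  let : NormedSpace ℝ Cl := { norm_smul_le := hns }
  have hprod := (LinearMap.mul ℝ Cl).fderiv_of_bilinear_apply (hψ₁ x) (hψ₂ x) (Pi.single μ 1)
  simp only [LinearMap.mul_apply'] at hprod
  rw [hprod, hK₁, hK₂, add_mul, mul_mul_mul_cancel_of_mul_eq_one (hunit x), mul_assoc, add_comm]
end
end
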